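/- arXiv:2506.12047 — 2 statements merged into one kernel-verified Lean document; each statement's English description precedes it below -/
import Mathlib

section
/- The system of congruences {1 (mod 3), 2 (mod 3), 2 (mod 4), 0 (mod 8), 5 (mod 8), 7 (mod 8), 9 (mod 16), 12 (mod 48), 36 (mod 48), 17 (mod 32), 15 (mod 18), 27 (mod 36), 3 (mod 72), 1 (mod 64), 33 (mod 192)} is a covering system: every integer satisfies at least one of these congruences. -/
theorem covering_system_15 (n : ℤ) :
    n % 3 = 1 ∨ n % 3 = 2 ∨ n % 4 = 2 ∨ n % 8 = 0 ∨ n % 8 = 5 ∨ n % 8 = 7 ∨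
    n % 16 = 9 ∨ n % 48 = 12 ∨ n % 48 = 36 ∨ n % 32 = 17 ∨ n % 18 = 15 ∨
    n % 36 = 27 ∨ n % 72 = 3 ∨ n % 64 = 1 ∨ n % 192 = 33 := by
  have h3 : n % 3 = n % 576 % 3 := (Int.emod_emod_of_dvd n (by norm_num)).symm
  have h4 : n % 4 = n % 576 % 4 := (Int.emod_emod_of_dvd n (by norm_num)).symm
  have h8 : n % 8 = n % 576 % 8 := (Int.emod_emod_of_dvd n (by norm_num)).symm
  have h16 : n % 16 = n % 576 % 16 := (Int.emod_emod_of_dvd n (by norm_num)).symm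
  have h48 : n % 48 = n % 576 % 48 := (Int.emod_emod_of_dvd n (by norm_num)).symm
  have h32 : n % 32 = n % 576 % 32 := (Int.emod_emod_of_dvd n (by norm_num)).symm
  have h18 : n % 18 = n % 576 % 18 := (Int.emod_emod_of_dvd n (by norm_num)).symm
  have h36 : n % 36 = n % 576 % 36 := (Int.emod_emod_of_dvd n (by norm_num)).symm
  have h72 : n % 72 = n % 576 % 72 := (Int.emod_emod_of_dvd n (by norm_num)).symm
  have h64 : n % 64 = n % 576 % 64 := (Int.emod_emod_of_dvd n (by norm_num)).symm
  have h192 : n % 192 = n % 576 % 192 := (Int.emod_emod_of_dvd n (by norm_num)).symm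
  rw [h3, h4, h8, h16, h48, h32, h18, h36, h72, h64, h192]
  have h0 : 0 ≤ n % 576 := Int.emod_nonneg n (by norm_num)
  have h1 : n % 576 < 576 := Int.emod_lt_of_pos n (by norm_num)
  set r := n % 576 with hr
  clear_value r
  interval_cases r <;> decide
end

section
/- Let M_l = 578938092213810 and N_l = 85206628521871. Then for every natural number k, the number 23·(M_l·k + N_l) cannot be written as q + L_n for any prime q and any Lucas number L_n. -/
def lucas : ℕ → ℕ
  | 0 => 2
  | 1 => 1
  | n + 2 => lucas n + lucas (n + 1)

/-- modulus: product of the covering primes 2,3,5,7,17,19,23,47,107,769,2207 -/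
def Lm : ℕ := 13315576120917630

/-- iterative computation of (lucas n % Lm, lucas (n+1) % Lm) -/
def lpair : ℕ → ℕ × ℕ
  | 0 => (2, 1)
  | n + 1 => ((lpair n).2, ((lpair n).1 + (lpair n).2) % Lm)

lemma lpair_spec : ∀ n, (lpair n).1 = lucas n % Lm ∧ (lpair n).2 = lucas (n+1) % Lm := by
  intro n
  induction n with
  | zero => constructor <;> rfl
  | succ m ih =>
    obtain ⟨h1, h2⟩ := ih
    refine ⟨h2, ?_⟩
    show ((lpair m).1 + (lpair m).2) % Lm = lucas (m+2) % Lm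
    rw [h1, h2, show lucas (m+2) = lucas m + lucas (m+1) from rfl, ← Nat.add_mod]

set_option maxRecDepth 100000 in
lemma lpair576 : lpair 576 = (2, 1) := by decide

set_option maxRecDepth 100000 in
lemma lucas_period : ∀ n, lucas (n + 576) % Lm = lucas n % Lm := by
  have H : ∀ n, lucas (n + 576) % Lm = lucas n % Lm ∧
      lucas (n + 577) % Lm = lucas (n + 1) % Lm := by
    intro n
    induction n with
    | zero =>
      have h1 := (lpair_spec 576).1
      have h2 := (lpair_spec 576).2
      rw [lpair576] at h1 h2
      exact ⟨h1.symm, h2.symm⟩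
    | succ m ih =>
      obtain ⟨h1, h2⟩ := ih
      refine ⟨by simpa [Nat.add_right_comm] using h2, ?_⟩
      have e1 : m + 1 + 577 = (m + 576) + 2 := by ring
      have e2 : m + 1 + 1 = m + 2 := rfl
      rw [e1, e2, show lucas ((m+576)+2) = lucas (m+576) + lucas (m+577) from rfl,
        show lucas (m+2) = lucas m + lucas (m+1) from rfl, Nat.add_mod, h1, h2, ← Nat.add_mod]
  exact fun n => (H n).1

lemma lucas_mod_reduce (n : ℕ) : lucas n % Lm = lucas (n % 576) % Lm := by
  have key : ∀ q r, lucas (576 * q + r) % Lm = lucas r % Lm := by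
    intro q
    induction q with
    | zero => intro r; simp
    | succ m ih =>
      intro r
      have e : 576 * (m + 1) + r = (576 * m + r) + 576 := by ring
      rw [e, lucas_period, ih]
  conv_lhs => rw [← Nat.div_add_mod n 576]
  exact key (n / 576) (n % 576)

/-- covering pairs (p, p₂) -/
def PL : List (ℕ × ℕ) :=
  [(2,3),(2,5),(3,5),(5,7),(7,17),(17,3),(19,5),(19,7),(23,3),(47,3),(107,3),(769,5),(2207,3)]

def good (a : ℕ) : Bool :=
  PL.any fun pr => (1959752456003033 % pr.1 == a % pr.1) &&
    !((1959752456003033 - pr.1) % pr.2 == a % pr.2)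

lemma PL_prime : ∀ pr ∈ PL, pr.1.Prime := by
  intro pr h
  fin_cases h <;> norm_num

set_option maxRecDepth 100000 in
lemma PL_facts : ∀ pr ∈ PL, pr.1 ∣ 23 * 578938092213810 ∧
    pr.2 ∣ 23 * 578938092213810 ∧ pr.1 ∣ Lm ∧ pr.2 ∣ Lm ∧
    0 < pr.1 ∧ 0 < pr.2 ∧ pr.1 ≤ 1959752456003033 := by decide

set_option maxRecDepth 1000000 in
set_option maxHeartbeats 4000000 in
lemma cover : ∀ r ∈ Finset.range 576, good ((lpair r).1) = true := by decide

theorem ap_avoiding_prime_plus_lucas (k : ℕ) :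
    ¬ ∃ (q n : ℕ), q.Prime ∧ 23 * (578938092213810 * k + 85206628521871) = q + lucas n := by
  rintro ⟨q, n, hq, heq⟩
  have hXval : 23 * (578938092213810 * k + 85206628521871)
      = 23 * 578938092213810 * k + 1959752456003033 := by ring
  rw [hXval] at heq
  -- get the covering pair for r = n % 576
  have hr : n % 576 ∈ Finset.range 576 := Finset.mem_range.mpr (Nat.mod_lt _ (by norm_num))
  have hg := cover (n % 576) hr
  rw [good, List.any_eq_true] at hg
  obtain ⟨pr, hprmem, hpr⟩ := hg
  simp only [Bool.and_eq_true, beq_iff_eq, Bool.not_eq_true', beq_eq_false_iff_ne, ne_eq] at hpr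
  obtain ⟨hp1, hp2⟩ := hpr
  obtain ⟨hPdvd, hP2dvd, hPdvdL, hP2dvdL, hPpos, hP2pos, hPle⟩ := PL_facts pr hprmem
  have hPprime := PL_prime pr hprmem
  set p := pr.1 with hp_def
  set p2 := pr.2 with hp2_def
  have hlval : (lpair (n % 576)).1 = lucas n % Lm := by
    rw [(lpair_spec (n % 576)).1, ← lucas_mod_reduce]
  rw [hlval] at hp1 hp2
  have hlp : (lucas n % Lm) % p = lucas n % p := Nat.mod_mod_of_dvd _ hPdvdL
  have hlp2 : (lucas n % Lm) % p2 = lucas n % p2 := Nat.mod_mod_of_dvd _ hP2dvdL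
  rw [hlp] at hp1
  rw [hlp2] at hp2
  -- p divides q
  have hkdvd : p ∣ 23 * 578938092213810 * k := Dvd.dvd.mul_right hPdvd k
  have hmod : (23 * 578938092213810 * k + 1959752456003033) % p = lucas n % p := by
    rw [Nat.add_mod, Nat.mod_eq_zero_of_dvd hkdvd, Nat.zero_add, Nat.mod_mod_of_dvd _ dvd_rfl, hp1]
  have hqp : p ∣ q := by
    have h0 : q + lucas n ≡ 0 + lucas n [MOD p] := by
      show (q + lucas n) % p = (0 + lucas n) % p
      rw [← heq, hmod, Nat.zero_add]
    exact (Nat.modEq_zero_iff_dvd).mp (h0.add_right_cancel' (lucas n))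
  have hqeq : q = p := ((Nat.prime_dvd_prime_iff_eq hPprime hq).mp hqp).symm
  rw [hqeq] at heq
  -- contradiction mod p2
  have hkdvd2 : p2 ∣ 23 * 578938092213810 * k := Dvd.dvd.mul_right hP2dvd k
  have hmod2 : (23 * 578938092213810 * k + 1959752456003033) % p2
      = ((1959752456003033 - p) + p) % p2 := by
    rw [Nat.add_mod, Nat.mod_eq_zero_of_dvd hkdvd2, Nat.zero_add, Nat.mod_mod_of_dvd _ dvd_rfl,
      Nat.sub_add_cancel hPle]
  have hfin : (1959752456003033 - p) + p ≡ lucas n + p [MOD p2] := by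
    show ((1959752456003033 - p) + p) % p2 = (lucas n + p) % p2
    rw [← hmod2, heq, Nat.add_comm p (lucas n)]
  exact hp2 (hfin.add_right_cancel' p)
end
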